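/- arXiv:2404.01538 — 4 statements merged into one kernel-verified Lean document; each statement's English description precedes it below -/
import Mathlib

section
/- Let d = n² + r be a positive square-free integer with d ≡ 2 or 3 (mod 4), where n, r are integers with n > 0 and −n < r ≤ n, r ≠ ±1. Then the elements a₁ = 1/2 + ((2n²+r−1)/(4n(n²+r)))√d and a₂ = 1/2 − ((2n²+r−1)/(4n(n²+r)))√d of K = ℚ(√d) are totally positive, and the unary forms a₁x² and a₂x² are perfect. -/
/-!
We model the real quadratic field `K = ℚ(√d)` concretely: an element
`a.1 + a.2·√d` is represented by its pair of rational coordinates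
`a : ℚ × ℚ`, and the ring of integers `O_K = ℤ[√d]` (for `d ≡ 2, 3 mod 4`)
by pairs of integers `x : ℤ × ℤ` representing `x.1 + x.2·√d`.
-/

noncomputable section

/-- An element `a.1 + a.2·√d` of `ℚ(√d)`, given by its rational coordinates. -/
abbrev QF := ℚ × ℚ

/-- The real embedding of `ℚ(√d)` sending `√d` to the positive square root. -/
def emb (d : ℤ) (a : QF) : ℝ := (a.1 : ℝ) + (a.2 : ℝ) * Real.sqrt (d : ℝ)

/-- Galois conjugation on `ℚ(√d)`. -/
def conj (a : QF) : QF := (a.1, -a.2)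

/-- `a ∈ ℚ(√d)` is totally positive: both real embeddings are positive. -/
def TotPos (d : ℤ) (a : QF) : Prop := 0 < emb d a ∧ 0 < emb d (conj a)

/-- Multiplication in `ℚ(√d)`, in coordinates. -/
def qmul (d : ℤ) (a b : QF) : QF :=
  (a.1 * b.1 + (d : ℚ) * a.2 * b.2, a.1 * b.2 + a.2 * b.1)

/-- The element of `ℚ(√d)` represented by `x = x.1 + x.2·√d ∈ ℤ[√d]`. -/
def ofInt (x : ℤ × ℤ) : QF := ((x.1 : ℚ), (x.2 : ℚ))

/-- `Tr_{K/ℚ}(a·x²)` for `a ∈ K = ℚ(√d)` and `x = x.1 + x.2·√d ∈ O_K = ℤ[√d]`. -/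
def trForm (d : ℤ) (a : QF) (x : ℤ × ℤ) : ℚ :=
  2 * (a.1 * ((x.1 : ℚ) ^ 2 + (d : ℚ) * (x.2 : ℚ) ^ 2)
    + 2 * (d : ℚ) * a.2 * (x.1 : ℚ) * (x.2 : ℚ))

/-- `μ` is the minimum `μ(a) = min_{x ∈ O_K, x ≠ 0} Tr(a x²)` of the unary form `a x²`. -/
def IsMinOf (d : ℤ) (a : QF) (μ : ℚ) : Prop :=
  (∃ x : ℤ × ℤ, x ≠ 0 ∧ trForm d a x = μ) ∧ ∀ x : ℤ × ℤ, x ≠ 0 → μ ≤ trForm d a x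

/-- The set `M(a) = {x ∈ O_K : Tr(a x²) = μ}` of minimal vectors of `a x²`,
given its minimum `μ = μ(a)`. -/
def MinVecs (d : ℤ) (a : QF) (μ : ℚ) : Set (ℤ × ℤ) :=
  {x : ℤ × ℤ | trForm d a x = μ}

/-- The unary form `a x²` is perfect: `a` is totally positive and is the unique
totally positive element whose minimum equals `μ(a)` and whose set of minimal
vectors contains `M(a)`. -/
def IsPerfect (d : ℤ) (a : QF) : Prop :=
  TotPos d a ∧ ∃ μ : ℚ, IsMinOf d a μ ∧
    ∀ b : QF, TotPos d b → IsMinOf d b μ → MinVecs d a μ ⊆ MinVecs d b μ → b = a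

/-- `u = u.1 + u.2·√d` is a unit of `ℤ[√d]` (norm `±1`). -/
def IsUnitPair (d : ℤ) (u : ℤ × ℤ) : Prop :=
  u.1 ^ 2 - d * u.2 ^ 2 = 1 ∨ u.1 ^ 2 - d * u.2 ^ 2 = -1

/-- `α + β·√d` (with `α, β > 0`) is the fundamental unit of `ℚ(√d)`:
it is a unit, and it is the smallest unit greater than `1`. -/
def IsFundUnit (d α β : ℤ) : Prop :=
  0 < α ∧ 0 < β ∧ IsUnitPair d (α, β) ∧
    ∀ u : ℤ × ℤ, IsUnitPair d u →
      1 < (u.1 : ℝ) + (u.2 : ℝ) * Real.sqrt (d : ℝ) →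
      (α : ℝ) + (β : ℝ) * Real.sqrt (d : ℝ) ≤ (u.1 : ℝ) + (u.2 : ℝ) * Real.sqrt (d : ℝ)

/-- The unary forms `a x²` and `b x²` lie in the same class up to homothety and
`GL₁(O_K)`-equivalence: `a = λ · b · u²` for some positive rational `λ` and unit `u`. -/
def SameClass (d : ℤ) (a b : QF) : Prop :=
  ∃ lam : ℚ, 0 < lam ∧ ∃ u : ℤ × ℤ, IsUnitPair d u ∧
    a = lam • qmul d b (qmul d (ofInt u) (ofInt u))

/-!
Scaled by `n`, the form `Tr(a₁ x²)` becomes the integral binary quadratic form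
`Q(x, y) = n x² + (2n² + r − 1) x y + n (n² + r) y²`, and
`4n·Q = (2n x + (2n² + r − 1) y)² + (4n² − (r − 1)²) y²`.
Since `|r − 1| ≤ n`, this gives `Q ≥ n` as soon as `|y| ≥ 2`; for `y = 0` it is clear, and
for `y = ±1` one has `Q − n = t (n t + r − 1)` with `t = x y + n`, which is `≥ 0` for every
integer `t`. So `μ(a₁) = 1`, attained at `1` and at `n − √d`, and the traces of `b x²` at these
two vectors determine `b`. The statement for `a₂` follows by Galois conjugation.
-/

section Conjugation

variable (d : ℤ)

lemma trForm_conj (a : QF) (x : ℤ × ℤ) : trForm d (conj a) x = trForm d a (x.1, -x.2) := by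
  simp only [trForm, conj]
  push_cast
  ring

lemma conj_conj (a : QF) : conj (conj a) = a := by
  simp [conj]

lemma totPos_conj_iff (a : QF) : TotPos d (conj a) ↔ TotPos d a := by
  simp only [TotPos, conj_conj]
  exact and_comm

lemma isMinOf_conj {a : QF} {μ : ℚ} (h : IsMinOf d a μ) : IsMinOf d (conj a) μ := by
  obtain ⟨⟨x, hx0, hx⟩, hmin⟩ := h
  refine ⟨⟨(x.1, -x.2), ?_, by simpa [trForm_conj] using hx⟩, fun y hy0 => ?_⟩
  · simpa [Prod.ext_iff] using hx0
  · rw [trForm_conj]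
    exact hmin _ (by simpa [Prod.ext_iff] using hy0)

lemma isPerfect_conj {a : QF} (h : IsPerfect d a) : IsPerfect d (conj a) := by
  obtain ⟨hpos, μ, hmin, huniq⟩ := h
  refine ⟨(totPos_conj_iff d a).mpr hpos, μ, isMinOf_conj d hmin, fun b hb hbmin hsub => ?_⟩
  suffices conj b = a by rw [← this, conj_conj]
  refine huniq _ ((totPos_conj_iff d b).mpr hb) (isMinOf_conj d hbmin) fun z hz => ?_
  have : trForm d b (z.1, -z.2) = μ := hsub (by simpa [MinVecs, trForm_conj] using hz)
  simpa [MinVecs, trForm_conj] using this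

end Conjugation

lemma totPos_of_sq_mul_lt {d : ℤ} (hd : 0 ≤ d) {a : QF} (h1 : 0 < a.1)
    (h : a.2 ^ 2 * d < a.1 ^ 2) : TotPos d a := by
  have hsq : ((a.2 : ℝ) * Real.sqrt d) ^ 2 < (a.1 : ℝ) ^ 2 := by
    rw [mul_pow, Real.sq_sqrt (by exact_mod_cast hd)]
    exact_mod_cast h
  have := abs_lt.mp (abs_lt_of_sq_lt_sq hsq (by exact_mod_cast h1.le))
  constructor <;> simp only [emb, conj] <;> push_cast <;> linarith

lemma trForm_one_zero (d : ℤ) (a : QF) : trForm d a (1, 0) = 2 * a.1 := by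
  simp [trForm]

lemma trForm_sub_sqrt (d n : ℤ) (a : QF) :
    trForm d a (n, -1) = 2 * (a.1 * (n ^ 2 + d) - 2 * d * n * a.2) := by
  simp only [trForm]
  push_cast
  ring

lemma eq_of_trForm_eq {d n : ℤ} (hd : d ≠ 0) (hn : n ≠ 0) {a b : QF}
    (h₁ : trForm d b (1, 0) = trForm d a (1, 0)) (h₂ : trForm d b (n, -1) = trForm d a (n, -1)) :
    b = a := by
  rw [trForm_one_zero, trForm_one_zero] at h₁
  have hfst : b.1 = a.1 := by linarith
  rw [trForm_sub_sqrt, trForm_sub_sqrt, hfst] at h₂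
  have hsnd : b.2 = a.2 := by
    have : (d * n : ℚ) ≠ 0 := by exact_mod_cast mul_ne_zero hd hn
    exact mul_left_cancel₀ this (by linarith)
  exact Prod.ext hfst hsnd

section BinaryForm

variable {n r : ℤ}

def binForm (n r x y : ℤ) : ℤ :=
  n * x ^ 2 + (2 * n ^ 2 + r - 1) * x * y + n * (n ^ 2 + r) * y ^ 2

lemma four_mul_binForm (x y : ℤ) :
    4 * n * binForm n r x y =
      (2 * n * x + (2 * n ^ 2 + r - 1) * y) ^ 2 + (4 * n ^ 2 - (r - 1) ^ 2) * y ^ 2 := by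
  unfold binForm
  ring

lemma binForm_of_sq_eq_one {x y : ℤ} (hy : y ^ 2 = 1) :
    binForm n r x y = n + (x * y + n) * (n * (x * y + n) + (r - 1)) := by
  unfold binForm
  linear_combination (n * (n ^ 2 + r) - n * x ^ 2) * hy

lemma mul_mul_add_nonneg_of_abs_le {s : ℤ} (hs : |s| ≤ n) (t : ℤ) : 0 ≤ t * (n * t + s) := by
  obtain ⟨hs₁, hs₂⟩ := abs_le.mp hs
  rcases lt_trichotomy t 0 with ht | rfl | ht
  · have : n * t + s ≤ 0 := by nlinarith
    exact mul_nonneg_of_nonpos_of_nonpos ht.le this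
  · simp
  · have : 0 ≤ n * t + s := by nlinarith
    exact mul_nonneg ht.le this

lemma le_binForm (hn : 0 < n) (hr : |r - 1| ≤ n) {x y : ℤ} (hxy : (x, y) ≠ 0) :
    n ≤ binForm n r x y := by
  rcases lt_trichotomy (y ^ 2) 1 with hy | hy | hy
  · have hy0 : y = 0 := by nlinarith
    have hx0 : x ≠ 0 := by rintro rfl; exact hxy (by simp [hy0])
    have : 0 < x ^ 2 := by positivity
    simp only [binForm, hy0]
    nlinarith
  · rw [binForm_of_sq_eq_one hy]
    linarith [mul_mul_add_nonneg_of_abs_le hr (x * y + n)]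
  · have hy4 : 4 ≤ y ^ 2 := by
      have : 2 ≤ |y| := by
        by_contra! h
        have : y ^ 2 ≤ 1 := by rw [← sq_abs]; nlinarith [abs_nonneg y]
        omega
      nlinarith [sq_abs y]
    have hr2 : (r - 1) ^ 2 ≤ n ^ 2 := sq_le_sq' (abs_le.mp hr).1 (abs_le.mp hr).2
    have := four_mul_binForm (n := n) (r := r) x y
    nlinarith [sq_nonneg (2 * n * x + (2 * n ^ 2 + r - 1) * y)]

lemma binForm_self_neg_one : binForm n r n (-1) = n := by
  unfold binForm
  ring

end BinaryForm

def perfElem (n r : ℤ) : QF :=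
  (1 / 2, (2 * (n : ℚ) ^ 2 + (r : ℚ) - 1) / (4 * (n : ℚ) * ((n : ℚ) ^ 2 + (r : ℚ))))

section PerfElem

variable {d n r : ℤ}

lemma sq_add_pos_of_abs_sub_one_le (hr : |r - 1| ≤ n) : 0 < n ^ 2 + r := by
  have := (abs_le.mp hr).1
  nlinarith

lemma trForm_perfElem (hd : d = n ^ 2 + r) (hn : 0 < n) (hr : |r - 1| ≤ n) (x : ℤ × ℤ) :
    trForm d (perfElem n r) x = binForm n r x.1 x.2 / n := by
  have hD : (n : ℚ) ^ 2 + r ≠ 0 := by exact_mod_cast (sq_add_pos_of_abs_sub_one_le hr).ne'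
  have hn' : (n : ℚ) ≠ 0 := by exact_mod_cast hn.ne'
  simp only [trForm, perfElem, binForm, hd]
  push_cast
  field_simp
  ring

lemma totPos_perfElem (hd : d = n ^ 2 + r) (hn : 0 < n) (hr : |r - 1| ≤ n) :
    TotPos d (perfElem n r) := by
  have hD := sq_add_pos_of_abs_sub_one_le hr
  apply totPos_of_sq_mul_lt (hd ▸ hD.le) (by simp [perfElem])
  have hr2 : (r - 1) ^ 2 < 4 * n ^ 2 := by
    have := sq_le_sq' (abs_le.mp hr).1 (abs_le.mp hr).2
    nlinarith
  have hD' : (0 : ℚ) < n ^ 2 + r := by exact_mod_cast hD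
  have hn' : (0 : ℚ) < n := by exact_mod_cast hn
  have hr2' : ((r : ℚ) - 1) ^ 2 < 4 * n ^ 2 := by exact_mod_cast hr2
  simp only [perfElem, hd]
  push_cast
  rw [div_pow, div_mul_eq_mul_div, div_lt_iff₀ (by positivity)]
  nlinarith

lemma isMinOf_perfElem (hd : d = n ^ 2 + r) (hn : 0 < n) (hr : |r - 1| ≤ n) :
    IsMinOf d (perfElem n r) 1 := by
  have hn' : (0 : ℚ) < n := by exact_mod_cast hn
  refine ⟨⟨(1, 0), by simp, by simp [trForm_one_zero, perfElem]⟩, fun x hx => ?_⟩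
  rw [trForm_perfElem hd hn hr, le_div_iff₀ hn', one_mul]
  exact_mod_cast le_binForm hn hr hx

lemma isPerfect_perfElem (hd : d = n ^ 2 + r) (hn : 0 < n) (hr : |r - 1| ≤ n) :
    IsPerfect d (perfElem n r) := by
  refine ⟨totPos_perfElem hd hn hr, 1, isMinOf_perfElem hd hn hr, fun b _ _ hsub => ?_⟩
  have hn' : (n : ℚ) ≠ 0 := by exact_mod_cast hn.ne'
  have h₁ : trForm d (perfElem n r) (1, 0) = 1 := by simp [trForm_one_zero, perfElem]
  have h₂ : trForm d (perfElem n r) (n, -1) = 1 := by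
    rw [trForm_perfElem hd hn hr, binForm_self_neg_one, div_self hn']
  refine eq_of_trForm_eq (hd ▸ (sq_add_pos_of_abs_sub_one_le hr).ne') hn.ne' ?_ ?_
  · rw [h₁]; exact hsub h₁
  · rw [h₂]; exact hsub h₂

end PerfElem

theorem statement0_general (d n r : ℤ) (hd : d = n ^ 2 + r) (hn : 0 < n) (hr1 : -n < r) (hr2 : r ≤ n) :
    let a₁ : QF := (1 / 2, (2 * (n : ℚ) ^ 2 + (r : ℚ) - 1) / (4 * (n : ℚ) * ((n : ℚ) ^ 2 + (r : ℚ))))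
    let a₂ : QF := (1 / 2, -((2 * (n : ℚ) ^ 2 + (r : ℚ) - 1) / (4 * (n : ℚ) * ((n : ℚ) ^ 2 + (r : ℚ)))))
    TotPos d a₁ ∧ TotPos d a₂ ∧ IsPerfect d a₁ ∧ IsPerfect d a₂ := by
  intro a₁ a₂
  have hr : |r - 1| ≤ n := abs_le.mpr ⟨by omega, by omega⟩
  have hpos : TotPos d (perfElem n r) := totPos_perfElem hd hn hr
  have hperf : IsPerfect d (perfElem n r) := isPerfect_perfElem hd hn hr
  exact ⟨hpos, (totPos_conj_iff d _).mpr hpos, hperf, isPerfect_conj d hperf⟩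

/-- for `d = n² + r` positive square-free, `d ≡ 2, 3 mod 4`, `n > 0`,
`−n < r ≤ n`, `r ≠ ±1`, the elements `a₁, a₂ = 1/2 ± ((2n²+r−1)/(4n(n²+r)))·√d`
are totally positive and the unary forms `a₁ x²`, `a₂ x²` are perfect. -/
theorem statement0 (d n r : ℤ) (hd : d = n ^ 2 + r) (hdpos : 0 < d) (hsf : Squarefree d)
    (hmod : d % 4 = 2 ∨ d % 4 = 3) (hn : 0 < n) (hr1 : -n < r) (hr2 : r ≤ n)
    (hrne1 : r ≠ 1) (hrnem1 : r ≠ -1) :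
    let a₁ : QF := (1 / 2, (2 * (n : ℚ) ^ 2 + (r : ℚ) - 1) / (4 * (n : ℚ) * ((n : ℚ) ^ 2 + (r : ℚ))))
    let a₂ : QF := (1 / 2, -((2 * (n : ℚ) ^ 2 + (r : ℚ) - 1) / (4 * (n : ℚ) * ((n : ℚ) ^ 2 + (r : ℚ)))))
    TotPos d a₁ ∧ TotPos d a₂ ∧ IsPerfect d a₁ ∧ IsPerfect d a₂ :=
  statement0_general d n r hd hn hr1 hr2
end
end

section
/- Let d = n² + r be a positive square-free integer with d ≡ 2 or 3 (mod 4), where n, r are integers with n > 0 and −n < r ≤ n, r ≠ ±1, and let a₁ = 1/2 + ((2n²+r−1)/(4n(n²+r)))√d ∈ K = ℚ(√d). Then μ(a₁) = 1 and {±1, ±(n − √d)} ⊆ M(a₁). -/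
/-!
We model the real quadratic field `K = ℚ(√d)` concretely: an element
`a.1 + a.2·√d` is represented by its pair of rational coordinates
`a : ℚ × ℚ`, and the ring of integers `O_K = ℤ[√d]` (for `d ≡ 2, 3 mod 4`)
by pairs of integers `x : ℤ × ℤ` representing `x.1 + x.2·√d`.
-/

noncomputable section

/-!
With `m = x₁ + n x₂` and `t = (r - 1)/n`, the trace form of `a₁` becomes the binary form
`Tr(a₁ x²) = m² + t m x₂ + x₂²`. Since `-n < r ≤ n` gives `|t| ≤ 1`, this is at least
`m² - |m x₂| + x₂²`, an integer whose double `m² + x₂² + (|m| - |x₂|)²` is positive on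
nonzero vectors; hence the minimum is `1`, attained at `±1` (`m = ±1, x₂ = 0`) and at
`±(n - √d)` (`m = 0, x₂ = ∓1`).
-/

theorem Int.one_le_sq_sub_abs_mul_add_sq {m q : ℤ} (h : m ≠ 0 ∨ q ≠ 0) :
    1 ≤ m ^ 2 - |m * q| + q ^ 2 := by
  have hpos : 0 < m ^ 2 + q ^ 2 := by
    rcases h with h | h <;> positivity
  nlinarith [sq_nonneg (|m| - |q|), sq_abs m, sq_abs q, abs_mul m q]

theorem one_le_sq_add_mul_mul_add_sq {K : Type*} [Field K] [LinearOrder K] [IsStrictOrderedRing K]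
    {t : K} (ht : |t| ≤ 1) {m q : ℤ} (h : m ≠ 0 ∨ q ≠ 0) :
    1 ≤ (m : K) ^ 2 + t * m * q + (q : K) ^ 2 := by
  have hint : (1 : K) ≤ (m : K) ^ 2 - |(m : K) * q| + (q : K) ^ 2 := by
    exact_mod_cast Int.one_le_sq_sub_abs_mul_add_sq h
  have hcross : -|(m : K) * q| ≤ t * m * q := by
    rw [mul_assoc]
    calc -|(m : K) * q| ≤ -(|t| * |(m : K) * q|) := by
          gcongr; exact mul_le_of_le_one_left (abs_nonneg _) ht
      _ = -|t * (m * q)| := by rw [abs_mul t]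
      _ ≤ t * (m * q) := neg_abs_le _
  linarith

theorem trForm_eq_of_eq_sq_add {d n r : ℤ} (hd : d = n ^ 2 + r) (hd0 : d ≠ 0) (hn : n ≠ 0)
    (x : ℤ × ℤ) :
    trForm d (1 / 2, (2 * (n : ℚ) ^ 2 + r - 1) / (4 * n * ((n : ℚ) ^ 2 + r))) x =
      ((x.1 + n * x.2 : ℤ) : ℚ) ^ 2 + ((r - 1) / n) * ((x.1 + n * x.2 : ℤ) : ℚ) * x.2
        + (x.2 : ℚ) ^ 2 := by
  have hdq : ((n : ℚ) ^ 2 + r) ≠ 0 := by exact_mod_cast hd ▸ hd0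
  simp only [trForm, hd]
  push_cast
  field_simp
  ring

theorem statement1_general (d n r : ℤ) (hd : d = n ^ 2 + r) (hdpos : 0 < d)
    (hn : 0 < n) (hr1 : -n < r) (hr2 : r ≤ n) :
    let a₁ : QF := (1 / 2, (2 * (n : ℚ) ^ 2 + (r : ℚ) - 1) / (4 * (n : ℚ) * ((n : ℚ) ^ 2 + (r : ℚ))))
    IsMinOf d a₁ 1 ∧
      ({(1, 0), (-1, 0), (n, -1), (-n, 1)} : Set (ℤ × ℤ)) ⊆ MinVecs d a₁ 1 := by
  intro a₁
  have hform : ∀ x, trForm d a₁ x = _ := trForm_eq_of_eq_sq_add hd hdpos.ne' hn.ne'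
  have ht : |((r : ℚ) - 1) / n| ≤ 1 := by
    have hnq : (0 : ℚ) < n := by exact_mod_cast hn
    rw [abs_le, le_div_iff₀ hnq, div_le_iff₀ hnq]
    constructor <;> norm_cast <;> omega
  refine ⟨⟨⟨(1, 0), by simp, by rw [hform]; norm_num⟩, fun x hx => ?_⟩, ?_⟩
  · rw [hform]
    refine one_le_sq_add_mul_mul_add_sq ht ?_
    rcases eq_or_ne x.2 0 with h | h
    · left; simpa [h, Prod.ext_iff] using hx
    · exact Or.inr h
  · rintro x (rfl | rfl | rfl | rfl) <;>
    simp only [MinVecs, Set.mem_ofPred_eq, hform] <;> push_cast <;> ring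

/-- for `d = n² + r` as above, `a₁ = 1/2 + ((2n²+r−1)/(4n(n²+r)))·√d`
has minimum `μ(a₁) = 1` and `{±1, ±(n − √d)} ⊆ M(a₁)`. -/
theorem statement1 (d n r : ℤ) (hd : d = n ^ 2 + r) (hdpos : 0 < d) (hsf : Squarefree d)
    (hmod : d % 4 = 2 ∨ d % 4 = 3) (hn : 0 < n) (hr1 : -n < r) (hr2 : r ≤ n)
    (hrne1 : r ≠ 1) (hrnem1 : r ≠ -1) :
    let a₁ : QF := (1 / 2, (2 * (n : ℚ) ^ 2 + (r : ℚ) - 1) / (4 * (n : ℚ) * ((n : ℚ) ^ 2 + (r : ℚ))))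
    IsMinOf d a₁ 1 ∧
      ({(1, 0), (-1, 0), (n, -1), (-n, 1)} : Set (ℤ × ℤ)) ⊆ MinVecs d a₁ 1 :=
  statement1_general d n r hd hdpos hn hr1 hr2
end
end

section
/- Let m ≥ 3 be an odd integer, δ ∈ {+1, −1}, k ≥ 0 an integer (with k ≥ 1 if δ = −1), β = m(m+2), α = km²(m+2)² + δ((m−1)/2·(m+2)² + 1), and let d be a positive integer with α² − dβ² = 1. Set l = km(m+2) + δ(m+1)/2. Then dα + l²α − 2ldβ = k((m+1)² + 1) + δ(m+1)/2, and this quantity is strictly less than α. -/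
/-!
We model the real quadratic field `K = ℚ(√d)` concretely: an element
`a.1 + a.2·√d` is represented by its pair of rational coordinates
`a : ℚ × ℚ`, and the ring of integers `O_K = ℤ[√d]` (for `d ≡ 2, 3 mod 4`)
by pairs of integers `x : ℤ × ℤ` representing `x.1 + x.2·√d`.
-/

noncomputable section

/-!
Substituting `dβ² = α² − 1` gives the identity
`β²(dα + l²α − 2ldβ) = α((α − lβ)² − 1) + 2lβ`. The shift `l` is chosen so that
`α − lβ = −δ(m + 1)`, whose square is `β + 1`; the right-hand side becomes `β(α + 2l)`,
and `α + 2l = β(k((m+1)² + 1) + δ(m+1)/2)` identically. The inequality follows from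
`α − k((m+1)² + 1) − δ(m+1)/2 = k(β − 2)(β + 1) + δ·(m−1)/2·(m+1)(m+3)`.
-/

theorem pell_quadratic_eval {R : Type*} [CommRing R] [IsDomain R] {d α β l c : R}
    (hpell : α ^ 2 - d * β ^ 2 = 1) (hβ : β ≠ 0) (hshift : (α - l * β) ^ 2 = β + 1)
    (hc : α + 2 * l = β * c) :
    d * α + l ^ 2 * α - 2 * l * d * β = c := by
  have h : β ^ 2 * (d * α + l ^ 2 * α - 2 * l * d * β) = β ^ 2 * c := by
    linear_combination (2 * l * β - α) * hpell + α * hshift + β * hc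
  exact mul_left_cancel₀ (pow_ne_zero 2 hβ) h

theorem gap_pos {m t k δ β : ℤ} (hm : 3 ≤ m) (hmt : m = 2 * t + 1) (hβ : β = m * (m + 2))
    (hδ : δ = 1 ∨ δ = -1) (hk : 0 ≤ k) (hkδ : δ = -1 → 1 ≤ k) :
    0 < k * ((β - 2) * (β + 1)) + δ * (t * ((m + 1) * (m + 3))) := by
  have hβ₁ : β + 1 = (m + 1) ^ 2 := by rw [hβ]; ring
  have hβ₂ : m + 3 ≤ β - 2 := by rw [hβ]; nlinarith
  have hpos : 0 ≤ (β - 2) * (β + 1) := mul_nonneg (by omega) (by omega)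
  rcases hδ with rfl | rfl
  · have ht : 0 < t * ((m + 1) * (m + 3)) := mul_pos (by omega) (by nlinarith)
    nlinarith [mul_nonneg hk hpos]
  · have hdom : t * ((m + 1) * (m + 3)) < (β - 2) * (β + 1) := by
      rw [hβ₁]; nlinarith [mul_le_mul_of_nonneg_right hβ₂ (sq_nonneg (m + 1))]
    nlinarith [mul_le_mul_of_nonneg_right (hkδ rfl) hpos]

theorem statement6_general (m δ k d : ℤ) (hm : 3 ≤ m) (hmodd : Odd m)
    (hδ : δ = 1 ∨ δ = -1) (hk : 0 ≤ k) (hkδ : δ = -1 → 1 ≤ k)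
    (β α : ℤ) (hβ : β = m * (m + 2))
    (hα : α = k * m ^ 2 * (m + 2) ^ 2 + δ * ((m - 1) / 2 * (m + 2) ^ 2 + 1))
    (hpell : α ^ 2 - d * β ^ 2 = 1)
    (l : ℤ) (hl : l = k * m * (m + 2) + δ * ((m + 1) / 2)) :
    d * α + l ^ 2 * α - 2 * l * d * β = k * ((m + 1) ^ 2 + 1) + δ * ((m + 1) / 2) ∧
      k * ((m + 1) ^ 2 + 1) + δ * ((m + 1) / 2) < α := by
  obtain ⟨t, hmt⟩ := hmodd
  rw [show (m - 1) / 2 = t by omega] at hα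
  rw [show (m + 1) / 2 = t + 1 by omega] at hl ⊢
  have hδsq : δ ^ 2 = 1 := by rcases hδ with rfl | rfl <;> norm_num
  have hβpos : 0 < β := by rw [hβ]; positivity
  refine ⟨pell_quadratic_eval hpell hβpos.ne' ?_ ?_, ?_⟩
  · have hshift : α - l * β = -δ * (m + 1) := by subst hα hl hβ hmt; ring
    rw [hshift, hβ]
    linear_combination (m + 1) ^ 2 * hδsq
  · subst hα hl hβ hmt; ring
  · have hgap : α - (k * ((m + 1) ^ 2 + 1) + δ * (t + 1))
        = k * ((β - 2) * (β + 1)) + δ * (t * ((m + 1) * (m + 3))) := by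
      subst hα hβ hmt; ring
    linarith [gap_pos hm hmt hβ hδ hk hkδ]

/-- with `l = km(m+2) + δ(m+1)/2` one has
`dα + l²α − 2ldβ = k((m+1)² + 1) + δ(m+1)/2 < α`. -/
theorem statement6 (m δ k d : ℤ) (hm : 3 ≤ m) (hmodd : Odd m)
    (hδ : δ = 1 ∨ δ = -1) (hk : 0 ≤ k) (hkδ : δ = -1 → 1 ≤ k)
    (β α : ℤ) (hβ : β = m * (m + 2))
    (hα : α = k * m ^ 2 * (m + 2) ^ 2 + δ * ((m - 1) / 2 * (m + 2) ^ 2 + 1))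
    (hdpos : 0 < d) (hpell : α ^ 2 - d * β ^ 2 = 1)
    (l : ℤ) (hl : l = k * m * (m + 2) + δ * ((m + 1) / 2)) :
    d * α + l ^ 2 * α - 2 * l * d * β = k * ((m + 1) ^ 2 + 1) + δ * ((m + 1) / 2) ∧
      k * ((m + 1) ^ 2 + 1) + δ * ((m + 1) / 2) < α :=
  statement6_general m δ k d hm hmodd hδ hk hkδ β α hβ hα hpell l hl
end
end

section
/- Let m ≥ 3 be an odd integer, δ ∈ {+1, −1}, k ≥ 0 an integer (with k ≥ 1 if δ = −1), β = m(m+2), α = km²(m+2)² + δ((m−1)/2·(m+2)² + 1), and let d be a positive integer with α² − dβ² = 1. Set l = km(m+2) + δ(m+1)/2. Then |dβ/α − l| < 1/m < 1/2; in particular l is the nearest integer to dβ/α. -/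
/-!
We model the real quadratic field `K = ℚ(√d)` concretely: an element
`a.1 + a.2·√d` is represented by its pair of rational coordinates
`a : ℚ × ℚ`, and the ring of integers `O_K = ℤ[√d]` (for `d ≡ 2, 3 mod 4`)
by pairs of integers `x : ℤ × ℤ` representing `x.1 + x.2·√d`.
-/

noncomputable section

/-!
Writing `l` for the candidate nearest integer, the Pell relation gives
`dβ/α - l = (α (α - βl) - 1) / (αβ)`. For this family `α - βl = -δ(m+1)`, so the numerator
has absolute value at most `|α|(m+1) + 1 < |α|(m+2)`, as `|α| > 1` by the Pell relation;
dividing by `|α| β = |α| m (m+2)` gives the bound `1/m`.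
-/

section PellApproximation

variable {K : Type*} [Field K] [LinearOrder K] [IsStrictOrderedRing K]

theorem pell_div_sub_eq {d α β l : K} (hα : α ≠ 0) (hβ : β ≠ 0) (hpell : α ^ 2 - d * β ^ 2 = 1) :
    d * β / α - l = (α * (α - β * l) - 1) / (α * β) := by
  field_simp
  linear_combination -hpell

theorem abs_pell_div_sub_lt {d α β l m : K} (hm : 0 < m) (hβ : β = m * (m + 2))
    (hpell : α ^ 2 - d * β ^ 2 = 1) (hα : 1 < |α|) (hl : |α - β * l| ≤ m + 1) :
    |d * β / α - l| < 1 / m := by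
  have hβpos : 0 < β := by rw [hβ]; positivity
  have hnum : |α * (α - β * l) - 1| < |α| * (m + 2) :=
    calc |α * (α - β * l) - 1| ≤ |α| * |α - β * l| + 1 := by
          simpa [abs_mul] using abs_sub (α * (α - β * l)) 1
      _ ≤ |α| * (m + 1) + 1 := by gcongr
      _ < |α| * (m + 2) := by linarith
  rw [pell_div_sub_eq (abs_pos.1 (one_pos.trans hα)) hβpos.ne' hpell, abs_div, abs_mul,
    abs_of_pos hβpos, div_lt_div_iff₀ (by positivity) hm, one_mul]
  calc |α * (α - β * l) - 1| * m < |α| * (m + 2) * m := mul_lt_mul_of_pos_right hnum hm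
    _ = |α| * β := by rw [hβ]; ring

theorem round_eq_of_abs_sub_lt_half [FloorRing K] {x : K} {n : ℤ} (h : |x - n| < 1 / 2) :
    round x = n := by
  obtain ⟨h₁, h₂⟩ := abs_lt.1 h
  rw [round_eq_iff]
  constructor <;> linarith

end PellApproximation

theorem one_lt_abs_of_pell {d α β : ℤ} (hd : 0 < d) (hβ : β ≠ 0) (hpell : α ^ 2 - d * β ^ 2 = 1) :
    1 < |α| := by
  rw [← one_lt_sq_iff_one_lt_abs]
  nlinarith [mul_pos hd (pow_pos (abs_pos.2 hβ) 2), sq_abs β]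

theorem sub_mul_eq_neg_mul_succ_of_odd {m : ℤ} (hm : Odd m) (δ k : ℤ) :
    k * m ^ 2 * (m + 2) ^ 2 + δ * ((m - 1) / 2 * (m + 2) ^ 2 + 1)
      - m * (m + 2) * (k * m * (m + 2) + δ * ((m + 1) / 2)) = -δ * (m + 1) := by
  obtain ⟨n, rfl⟩ := hm
  rw [show (2 * n + 1 - 1) / 2 = n by omega, show (2 * n + 1 + 1) / 2 = n + 1 by omega]
  ring

theorem statement7_general (m δ k d : ℤ) (hm : 3 ≤ m) (hmodd : Odd m)
    (hδ : δ = 1 ∨ δ = -1)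
    (β α : ℤ) (hβ : β = m * (m + 2))
    (hα : α = k * m ^ 2 * (m + 2) ^ 2 + δ * ((m - 1) / 2 * (m + 2) ^ 2 + 1))
    (hdpos : 0 < d) (hpell : α ^ 2 - d * β ^ 2 = 1)
    (l : ℤ) (hl : l = k * m * (m + 2) + δ * ((m + 1) / 2)) :
    |(d : ℚ) * (β : ℚ) / (α : ℚ) - (l : ℚ)| < 1 / (m : ℚ) ∧
      1 / (m : ℚ) < 1 / 2 ∧
      round ((d : ℚ) * (β : ℚ) / (α : ℚ)) = l := by
  have hδ1 : |δ| = 1 := by rcases hδ with rfl | rfl <;> simp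
  have hkey : |α - β * l| = m + 1 := by
    rw [hα, hβ, hl, sub_mul_eq_neg_mul_succ_of_odd hmodd, abs_mul, abs_neg, hδ1, one_mul,
      abs_of_pos (by omega)]
  have hβ0 : β ≠ 0 := by rw [hβ]; positivity
  have hmQ : (3 : ℚ) ≤ m := by exact_mod_cast hm
  have hnear : |(d : ℚ) * β / α - l| < 1 / m :=
    abs_pell_div_sub_lt (by linarith) (by exact_mod_cast hβ) (by exact_mod_cast hpell)
      (by exact_mod_cast one_lt_abs_of_pell hdpos hβ0 hpell) (by exact_mod_cast hkey.le)
  have hhalf : 1 / (m : ℚ) < 1 / 2 := by gcongr; linarith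
  exact ⟨hnear, hhalf, round_eq_of_abs_sub_lt_half (hnear.trans hhalf)⟩

/-- with `l = km(m+2) + δ(m+1)/2` one has
`|dβ/α − l| < 1/m < 1/2`; in particular `l` is the nearest integer to `dβ/α`. -/
theorem statement7 (m δ k d : ℤ) (hm : 3 ≤ m) (hmodd : Odd m)
    (hδ : δ = 1 ∨ δ = -1) (hk : 0 ≤ k) (hkδ : δ = -1 → 1 ≤ k)
    (β α : ℤ) (hβ : β = m * (m + 2))
    (hα : α = k * m ^ 2 * (m + 2) ^ 2 + δ * ((m - 1) / 2 * (m + 2) ^ 2 + 1))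
    (hdpos : 0 < d) (hpell : α ^ 2 - d * β ^ 2 = 1)
    (l : ℤ) (hl : l = k * m * (m + 2) + δ * ((m + 1) / 2)) :
    |(d : ℚ) * (β : ℚ) / (α : ℚ) - (l : ℚ)| < 1 / (m : ℚ) ∧
      1 / (m : ℚ) < 1 / 2 ∧
      round ((d : ℚ) * (β : ℚ) / (α : ℚ)) = l :=
  statement7_general m δ k d hm hmodd hδ β α hβ hα hdpos hpell l hl
end
end
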